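/- Let F be a finite field with q = |F| elements and let K be a finite field extension of F of degree m. Then for every F-linear endomorphism φ of K there exist unique coefficients a_0, a_1, ..., a_{m−1} ∈ K such that φ(x) = Σ_{i=0}^{m−1} a_i · x^{q^i} for all x ∈ K. (Equivalently, the F-algebra of linearized polynomials modulo the left ideal generated by X^{q^m} − X is isomorphic to End_F(K).) -/

import Mathlib

open Module

/-- Every `F`-linear endomorphism of a degree-`m` extension `K` of a finite
field `F` with `q` elements is given uniquely by a linearized polynomial of
`q`-degree less than `m`: `φ(x) = Σ_{i<m} a_i x^{q^i}`. -/
theorem endomorphism_eq_linearized_polynomial (F K : Type*) [Field F] [Fintype F]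
    [Field K] [Fintype K] [Algebra F K]
    (q m : ℕ) (hq : q = Fintype.card F) (hm : m = Module.finrank F K)
    (φ : K →ₗ[F] K) :
    ∃! a : Fin m → K, ∀ x : K, φ x = ∑ i : Fin m, a i * x ^ q ^ (i : ℕ) := by
  classical
  have hq2 : 2 ≤ q := by rw [hq]; exact Fintype.one_lt_card
  -- characteristic facts
  obtain ⟨p, hpF⟩ := CharP.exists F
  haveI := hpF
  obtain ⟨n, hp, hn⟩ := FiniteField.card F p
  haveI : Fact p.Prime := ⟨hp⟩
  haveI : CharP K p := charP_of_injective_algebraMap (algebraMap F K).injective p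
  -- additivity of the `q^i`-power maps
  have hqpow : ∀ (i : ℕ) (x y : K), (x + y) ^ q ^ i = x ^ q ^ i + y ^ q ^ i := by
    intro i x y
    rw [hq, hn, ← pow_mul]
    exact add_pow_char_pow ..
  -- the `q^i`-power maps as `F`-linear maps
  let f : Fin m → (K →ₗ[F] K) := fun i =>
    { toFun := fun x => x ^ q ^ (i : ℕ)
      map_add' := fun x y => hqpow i x y
      map_smul' := fun c x => by
        rw [RingHom.id_apply, Algebra.smul_def, Algebra.smul_def, mul_pow, ← map_pow, hq,
          FiniteField.pow_card_pow] }
  -- the `q^i`-power maps as monoid homs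
  let g : Fin m → (K →* K) := fun i => powMonoidHom (q ^ (i : ℕ))
  -- the cardinality of `K`
  have hcardK : Fintype.card K = q ^ m := by
    rw [hq, hm]; exact card_eq_pow_finrank
  -- the monoid homs are pairwise distinct
  have hginj : Function.Injective g := by
    intro i j hij
    by_contra hne
    -- WLOG `i < j`
    wlog hlt : (i : ℕ) < (j : ℕ) generalizing i j
    · exact this hij.symm (Ne.symm hne) (by omega)
    obtain ⟨ξ, hξ⟩ := IsCyclic.exists_generator (α := Kˣ)
    have hord : orderOf ξ = q ^ m - 1 := by
      rw [orderOf_eq_card_of_forall_mem_zpowers hξ, Nat.card_eq_fintype_card,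
        Fintype.card_units, hcardK]
    have hpow : (ξ : K) ^ q ^ (i : ℕ) = (ξ : K) ^ q ^ (j : ℕ) := by
      have := DFunLike.congr_fun hij (ξ : K)
      simpa [g, powMonoidHom] using this
    have hpowu : ξ ^ q ^ (i : ℕ) = ξ ^ q ^ (j : ℕ) := by
      ext; push_cast; exact hpow
    have hmod : q ^ (i : ℕ) ≡ q ^ (j : ℕ) [MOD q ^ m - 1] := by
      rw [← hord]; exact (pow_eq_pow_iff_modEq).mp hpowu
    have hdvd : q ^ m - 1 ∣ q ^ (j : ℕ) - q ^ (i : ℕ) :=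
      (Nat.modEq_iff_dvd' (Nat.pow_le_pow_right (by omega) hlt.le)).mp hmod
    have h1 : q ^ (j : ℕ) < q ^ m := Nat.pow_lt_pow_right (by omega) j.isLt
    have h2 : 1 ≤ q ^ (i : ℕ) := Nat.one_le_pow _ _ (by omega)
    have h3 : q ^ (i : ℕ) < q ^ (j : ℕ) := Nat.pow_lt_pow_right (by omega) hlt
    have hlt2 : q ^ (j : ℕ) - q ^ (i : ℕ) < q ^ m - 1 := by omega
    have hpos : 0 < q ^ (j : ℕ) - q ^ (i : ℕ) := by omega
    exact absurd (Nat.le_of_dvd hpos hdvd) (by omega)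
  -- linear independence of the power maps over `K`
  have hfLI : ∀ c : Fin m → K, ∑ i, c i • f i = 0 → ∀ i, c i = 0 := by
    intro c hc
    have hgLI : LinearIndependent K (fun i : Fin m => ((g i : K →* K) : K → K)) :=
      (linearIndependent_monoidHom K K).comp g hginj
    rw [Fintype.linearIndependent_iff] at hgLI
    refine hgLI c ?_
    funext x
    have := LinearMap.congr_fun hc x
    simpa [f, g, powMonoidHom, Finset.sum_apply] using this
  -- the linear map from coefficient vectors to endomorphisms
  let T : (Fin m → K) →ₗ[K] (K →ₗ[F] K) :=
    { toFun := fun a => ∑ i, a i • f i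
      map_add' := fun a b => by simp [add_smul, Finset.sum_add_distrib]
      map_smul' := fun c a => by simp [smul_smul, Finset.smul_sum] }
  have hTinj : Function.Injective T := by
    rw [← LinearMap.ker_eq_bot, LinearMap.ker_eq_bot']
    intro c hc
    funext i
    exact hfLI c hc i
  have hTsurj : Function.Surjective T := by
    have hfr : finrank K (Fin m → K) = finrank K (K →ₗ[F] K) := by
      rw [Module.finrank_fin_fun, Module.finrank_linearMap_self, hm]
    exact (LinearMap.injective_iff_surjective_of_finrank_eq_finrank hfr).mp hTinj
  obtain ⟨a, ha⟩ := hTsurj φ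
  have hTapp : ∀ (b : Fin m → K) (x : K), (T b) x = ∑ i : Fin m, b i * x ^ q ^ (i : ℕ) := by
    intro b x
    simp [T, f, smul_eq_mul]
  refine ⟨a, fun x => by rw [← ha, hTapp], fun b hb => ?_⟩
  apply hTinj
  rw [ha]
  ext x
  rw [hTapp]
  exact (hb x).symm
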